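/- Assume the L¹ spectral inequality on E holds with constant N ≥ 1. Let T > 0 and let J ⊆ (0,T) be a Lebesgue measurable set with |J| > 0. Then there exists C > 0 such that for every f ∈ L²(μ): ‖S_T f‖_{L²(μ)} ≤ C ∫_0^T 1_J(s) ( ∫_E |S_s f| dμ ) ds. -/

import Mathlib

open MeasureTheory Filter Topology Set Real Metric

/-!
Splitting `S_s f` at frequency `Λ` and applying the spectral inequality to the low frequencies
gives, for `t' ≤ s` and a constant `K` depending only on `N` and `μ(M)`,
`‖S_s f‖ ≤ N e^{NΛ} ∫_E |S_s f| + K e^{NΛ - (s - t') Λ²} ‖S_{t'} f‖`.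
Near a Lebesgue density point `ℓ` of `J`, the dyadic windows `(ℓ + ¾ d 2⁻ᵐ, ℓ + d 2⁻ᵐ)` meet `J`
in measure at least `d 2⁻ᵐ / 8`. Averaging the estimate over the `m`-th window with `Λ = L 2ᵐ`
bounds `‖S_{ℓ + d 2⁻ᵐ} f‖` by the observation on that window plus a factor `e^{-d L² 2ᵐ / 4}` times
`‖S_{ℓ + d 2⁻ᵐ⁻¹} f‖`; for `L` large these factors beat the costs `e^{N L 2ᵐ⁺¹}` of the next
windows, so the recursion telescopes to a bound by the observation on all of `J`.
-/

namespace HilbertBasis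

variable {H : Type*} [NormedAddCommGroup H] [InnerProductSpace ℝ H] (e : HilbertBasis ℕ ℝ H)

theorem repr_apply_of_hasSum {c : ℕ → ℝ} {g : H} (h : HasSum (fun k => c k • e k) g) (j : ℕ) :
    e.repr g j = c j := by
  have hj := h.mapL (innerSL ℝ (e j))
  simp only [innerSL_apply_apply, real_inner_smul_right,
    orthonormal_iff_ite.mp e.orthonormal] at hj
  rw [e.repr_apply_apply]
  simpa using hj.unique (hasSum_single j fun k hk => by simp [Ne.symm hk])

theorem hasSum_repr_sq (g : H) : HasSum (fun k => e.repr g k ^ 2) (‖g‖ ^ 2) := by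
  simpa [e.repr_apply_apply, sq, real_inner_comm, real_inner_self_eq_norm_sq]
    using e.hasSum_inner_mul_inner g g

theorem norm_le_mul_of_abs_repr_le {g h : H} {C : ℝ} (hC : 0 ≤ C)
    (hk : ∀ k, |e.repr g k| ≤ C * |e.repr h k|) : ‖g‖ ≤ C * ‖h‖ := by
  have hsq : ‖g‖ ^ 2 ≤ (C * ‖h‖) ^ 2 := by
    rw [mul_pow]
    refine hasSum_le (fun k => ?_) (e.hasSum_repr_sq g) ((e.hasSum_repr_sq h).mul_left (C ^ 2))
    rw [← sq_abs, ← sq_abs (e.repr h k), ← mul_pow]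
    exact pow_le_pow_left₀ (abs_nonneg _) (hk k) 2
  exact (pow_le_pow_iff_left₀ (norm_nonneg g) (by positivity) two_ne_zero).mp hsq

end HilbertBasis

section HeatSemigroup

variable {H : Type*} [NormedAddCommGroup H] [InnerProductSpace ℝ H]
  {e : HilbertBasis ℕ ℝ H} {lam : ℕ → ℝ}

/-- `S t = e^{-t A²}` for the operator `A` that is diagonal in `e` with eigenvalues `lam`. -/
def IsHeatSemigroup (e : HilbertBasis ℕ ℝ H) (lam : ℕ → ℝ) (S : ℝ → H → H) : Prop :=
  ∀ t : ℝ, 0 ≤ t → ∀ f : H,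
    HasSum (fun k => (Real.exp (-(t * lam k ^ 2)) * e.repr f k) • e k) (S t f)

def IsSpectralProjection (e : HilbertBasis ℕ ℝ H) (lam : ℕ → ℝ) (Proj : ℝ → H → H) : Prop :=
  ∀ (Λ : ℝ) (f : H), HasSum (fun k => (if lam k ≤ Λ then e.repr f k else 0) • e k) (Proj Λ f)

namespace IsHeatSemigroup

variable {S : ℝ → H → H}

theorem repr_apply (hS : IsHeatSemigroup e lam S) {t : ℝ} (ht : 0 ≤ t) (f : H) (k : ℕ) :
    e.repr (S t f) k = Real.exp (-(t * lam k ^ 2)) * e.repr f k :=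
  e.repr_apply_of_hasSum (hS t ht f) k

theorem zero_apply (hS : IsHeatSemigroup e lam S) (f : H) : S 0 f = f :=
  (hS 0 le_rfl f).unique (by simpa using e.hasSum_repr f)

theorem norm_le_of_le (hS : IsHeatSemigroup e lam S) {t₁ t₂ : ℝ} (h₁ : 0 ≤ t₁) (h₁₂ : t₁ ≤ t₂)
    (f : H) : ‖S t₂ f‖ ≤ ‖S t₁ f‖ := by
  refine (e.norm_le_mul_of_abs_repr_le zero_le_one fun k => ?_).trans_eq (one_mul _)
  rw [hS.repr_apply (h₁.trans h₁₂), hS.repr_apply h₁, one_mul, abs_mul, abs_mul]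
  gcongr

theorem norm_le (hS : IsHeatSemigroup e lam S) {t : ℝ} (ht : 0 ≤ t) (f : H) : ‖S t f‖ ≤ ‖f‖ := by
  simpa [hS.zero_apply] using hS.norm_le_of_le le_rfl ht f

theorem norm_sub_proj_le (hS : IsHeatSemigroup e lam S) {Proj : ℝ → H → H}
    (hProj : IsSpectralProjection e lam Proj) {Λ t₁ t₂ : ℝ} (hΛ : 0 ≤ Λ) (h₁ : 0 ≤ t₁)
    (h₁₂ : t₁ ≤ t₂) (f : H) :
    ‖S t₂ f - Proj Λ (S t₂ f)‖ ≤ Real.exp (-((t₂ - t₁) * Λ ^ 2)) * ‖S t₁ f‖ := by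
  refine e.norm_le_mul_of_abs_repr_le (exp_pos _).le fun k => ?_
  rw [map_sub, lp.coeFn_sub, Pi.sub_apply, e.repr_apply_of_hasSum (hProj Λ _) k]
  split_ifs with hk
  · rw [sub_self, abs_zero]
    positivity
  · rw [sub_zero, hS.repr_apply (h₁.trans h₁₂), hS.repr_apply h₁, abs_mul, abs_mul, abs_exp,
      abs_exp, ← mul_assoc, ← exp_add]
    have hsq : Λ ^ 2 ≤ lam k ^ 2 := pow_le_pow_left₀ hΛ (not_le.mp hk).le 2
    gcongr
    nlinarith [mul_le_mul_of_nonneg_left hsq (sub_nonneg.mpr h₁₂)]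

theorem continuousOn (hS : IsHeatSemigroup e lam S) (f : H) :
    ContinuousOn (fun s => S s f) (Ici 0) := by
  intro s₀ hs₀
  set F : ℝ → ℕ → ℝ := fun s k =>
    ((Real.exp (-(s * lam k ^ 2)) - Real.exp (-(s₀ * lam k ^ 2))) * e.repr f k) ^ 2
  have hnorm : ∀ s ∈ Ici (0 : ℝ), ‖S s f - S s₀ f‖ = √(∑' k, F s k) := fun s hs => by
    rw [← sqrt_sq (norm_nonneg (S s f - S s₀ f)), ← (e.hasSum_repr_sq _).tsum_eq]
    simp only [F, map_sub, lp.coeFn_sub, Pi.sub_apply, hS.repr_apply hs, hS.repr_apply hs₀,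
      sub_mul]
  have hexp_mem : ∀ s ∈ Ici (0 : ℝ), ∀ k, Real.exp (-(s * lam k ^ 2)) ∈ Icc 0 1 := fun s hs k =>
    ⟨(exp_pos _).le, exp_le_one_iff.mpr (neg_nonpos.mpr (mul_nonneg hs (sq_nonneg _)))⟩
  have hF : Tendsto (fun s => ∑' k, F s k) (𝓝[Ici 0] s₀) (𝓝 0) := by
    simpa using tendsto_tsum_of_dominated_convergence (e.hasSum_repr_sq f).summable
      (fun k => ((by fun_prop : Continuous (F · k)).tendsto' s₀ 0 (by simp [F])).mono_left
        nhdsWithin_le_nhds)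
      (eventually_mem_nhdsWithin.mono fun s hs k => by
        simp only [F, Real.norm_eq_abs, mul_pow]
        rw [abs_of_nonneg (by positivity)]
        refine mul_le_of_le_one_left (sq_nonneg _) ((sq_le_one_iff_abs_le_one _).mpr ?_)
        exact abs_sub_le_of_nonneg_of_le (hexp_mem s hs k).1 (hexp_mem s hs k).2
          (hexp_mem s₀ hs₀ k).1 (hexp_mem s₀ hs₀ k).2)
  rw [ContinuousWithinAt, tendsto_iff_norm_sub_tendsto_zero]
  refine ((continuous_sqrt.tendsto' 0 0 sqrt_zero).comp hF).congr' ?_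
  filter_upwards [eventually_mem_nhdsWithin] with s hs using (hnorm s hs).symm

end IsHeatSemigroup
end HeatSemigroup

namespace MeasureTheory.Lp

variable {M : Type*} [MeasurableSpace M] {μ : Measure M} [IsFiniteMeasure μ]

theorem setIntegral_abs_le (E : Set M) (h : Lp ℝ 2 μ) :
    ∫ x in E, |h x| ∂μ ≤ √(μ.real univ) * ‖h‖ := by
  have hint : Integrable h μ :=
    memLp_one_iff_integrable.mp ((Lp.memLp h).mono_exponent (by norm_num))
  have hL1 : ∫ x, |h x| ∂μ = (eLpNorm h 1 μ).toReal := by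
    simp only [← Real.norm_eq_abs]
    rw [integral_norm_eq_lintegral_enorm (Lp.aestronglyMeasurable h),
      eLpNorm_one_eq_lintegral_enorm]
  have hL1L2 : eLpNorm h 1 μ ≤ eLpNorm h 2 μ * μ univ ^ (1 / 2 : ℝ) := by
    convert eLpNorm_le_eLpNorm_mul_rpow_measure_univ (p := 1) (q := 2) (by norm_num)
      (Lp.aestronglyMeasurable h) using 3
    norm_num
  calc ∫ x in E, |h x| ∂μ ≤ ∫ x, |h x| ∂μ :=
        setIntegral_le_integral hint.abs (ae_of_all _ fun x => abs_nonneg _)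
    _ ≤ (eLpNorm h 2 μ * μ univ ^ (1 / 2 : ℝ)).toReal :=
        hL1 ▸ ENNReal.toReal_mono (ENNReal.mul_ne_top (Lp.eLpNorm_ne_top h)
          (by simp [measure_ne_top])) hL1L2
    _ = √(μ.real univ) * ‖h‖ := by
        rw [ENNReal.toReal_mul, ← ENNReal.toReal_rpow, ← Real.sqrt_eq_rpow, mul_comm]
        rfl

theorem setIntegral_abs_le_add (E : Set M) (a b : Lp ℝ 2 μ) :
    ∫ x in E, |a x| ∂μ ≤ ∫ x in E, |b x| ∂μ + √(μ.real univ) * ‖a - b‖ := by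
  have hint : ∀ h : Lp ℝ 2 μ, IntegrableOn (fun x => |h x|) E μ := fun h =>
    (memLp_one_iff_integrable.mp ((Lp.memLp h).mono_exponent (by norm_num))).abs.integrableOn
  calc ∫ x in E, |a x| ∂μ ≤ ∫ x in E, (|b x| + |(a - b : Lp ℝ 2 μ) x|) ∂μ := by
        refine integral_mono_ae (hint a) ((hint b).add (hint (a - b))) ?_
        filter_upwards [ae_restrict_of_ae (Lp.coeFn_sub a b)] with x hx
        rw [hx, Pi.sub_apply]
        linarith [abs_sub_abs_le_abs_sub (a x) (b x)]
    _ ≤ _ := by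
        rw [integral_add (hint b) (hint (a - b))]
        gcongr
        exact setIntegral_abs_le E (a - b)

theorem continuous_setIntegral_abs (E : Set M) :
    Continuous fun h : Lp ℝ 2 μ => ∫ x in E, |h x| ∂μ :=
  (LipschitzWith.of_le_add_mul' _ fun a b => by
    rw [dist_eq_norm_sub]
    exact setIntegral_abs_le_add E a b).continuous

theorem norm_le_of_observable {E : Set M} {u p : Lp ℝ 2 μ} {A : ℝ} (hA : 0 ≤ A)
    (hp : ‖p‖ ≤ A * ∫ x in E, |p x| ∂μ) :
    ‖u‖ ≤ A * ∫ x in E, |u x| ∂μ + (A * √(μ.real univ) + 1) * ‖u - p‖ := by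
  have hpE := setIntegral_abs_le_add E p u
  rw [norm_sub_rev] at hpE
  calc ‖u‖ ≤ ‖p‖ + ‖u - p‖ := norm_le_insert' u p
    _ ≤ A * (∫ x in E, |u x| ∂μ + √(μ.real univ) * ‖u - p‖) + ‖u - p‖ := by
        gcongr
        exact hp.trans (by gcongr)
    _ = _ := by ring

end MeasureTheory.Lp

theorem le_div_mul_setIntegral_add {α : Type*} [MeasurableSpace α] {μ : Measure α}
    {I : Set α} {g : α → ℝ} {a A B : ℝ} (hI : MeasurableSet I) (hμI : 0 < μ.real I)
    (hg : IntegrableOn g I μ) (h : ∀ s ∈ I, a ≤ A * g s + B) :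
    a ≤ A / μ.real I * ∫ s in I, g s ∂μ + B := by
  have hfin : μ I ≠ ⊤ := fun htop => hμI.ne' (by simp [measureReal_def, htop])
  have hint : ∫ _ in I, a ∂μ ≤ ∫ s in I, (A * g s + B) ∂μ :=
    setIntegral_mono_on (integrableOn_const hfin) ((hg.const_mul A).add
      (integrableOn_const hfin)) hI h
  rw [setIntegral_const, integral_add (hg.const_mul A) (integrableOn_const hfin),
    integral_const_mul, setIntegral_const, smul_eq_mul, smul_eq_mul] at hint
  rw [div_mul_eq_mul_div, ← sub_le_iff_le_add, le_div_iff₀ hμI]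
  linarith

namespace IsHeatSemigroup

variable {M : Type*} [MeasurableSpace M] {μ : Measure M} [IsFiniteMeasure μ]
  {e : HilbertBasis ℕ ℝ (Lp ℝ 2 μ)} {lam : ℕ → ℝ} {S : ℝ → Lp ℝ 2 μ → Lp ℝ 2 μ}

theorem integrableOn_observation (hS : IsHeatSemigroup e lam S) (E : Set M) (f : Lp ℝ 2 μ)
    {J : Set ℝ} (hJm : MeasurableSet J) (hJ : J ⊆ Ici 0) (hJfin : volume J < ⊤) :
    IntegrableOn (fun s => ∫ x in E, |S s f x| ∂μ) J := by
  have hcont : ContinuousOn (fun s => ∫ x in E, |S s f x| ∂μ) J :=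
    ((Lp.continuous_setIntegral_abs E).comp_continuousOn (hS.continuousOn f)).mono hJ
  refine IntegrableOn.of_bound hJfin (hcont.aestronglyMeasurable hJm) (√(μ.real univ) * ‖f‖)
    ((ae_restrict_mem hJm).mono fun s hs => ?_)
  rw [Real.norm_of_nonneg (integral_nonneg fun x => abs_nonneg _)]
  exact (Lp.setIntegral_abs_le E _).trans
    (mul_le_mul_of_nonneg_left (hS.norm_le (hJ hs) f) (sqrt_nonneg _))

theorem norm_le_window (hS : IsHeatSemigroup e lam S) {Proj : ℝ → Lp ℝ 2 μ → Lp ℝ 2 μ}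
    (hProj : IsSpectralProjection e lam Proj) {E : Set M} {A Λ : ℝ} (hA : 0 ≤ A) (hΛ : 0 ≤ Λ)
    (hspec : ∀ f, ‖Proj Λ f‖ ≤ A * ∫ x in E, |Proj Λ f x| ∂μ) {I : Set ℝ} {t' δ τ t : ℝ}
    (ht' : 0 ≤ t') (hδ₀ : 0 ≤ δ) (hδ : t' + δ ≤ τ) (hI : I ⊆ Ioo τ t) (hIm : MeasurableSet I)
    (hIpos : 0 < volume.real I) (f : Lp ℝ 2 μ)
    (hg : IntegrableOn (fun s => ∫ x in E, |S s f x| ∂μ) I) :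
    ‖S t f‖ ≤ A / volume.real I * (∫ s in I, ∫ x in E, |S s f x| ∂μ)
      + (A * √(μ.real univ) + 1) * exp (-(δ * Λ ^ 2)) * ‖S t' f‖ := by
  refine le_div_mul_setIntegral_add hIm hIpos hg fun s hs => ?_
  obtain ⟨hτs, hst⟩ := hI hs
  have ht's : t' ≤ s := by linarith
  calc ‖S t f‖ ≤ ‖S s f‖ := hS.norm_le_of_le (ht'.trans ht's) hst.le f
    _ ≤ A * ∫ x in E, |S s f x| ∂μ + (A * √(μ.real univ) + 1) * ‖S s f - Proj Λ (S s f)‖ :=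
        Lp.norm_le_of_observable hA (hspec _)
    _ ≤ A * ∫ x in E, |S s f x| ∂μ
          + (A * √(μ.real univ) + 1) * (exp (-((s - t') * Λ ^ 2)) * ‖S t' f‖) := by
        gcongr
        exact hS.norm_sub_proj_le hProj hΛ ht' ht's f
    _ ≤ A * ∫ x in E, |S s f x| ∂μ
          + (A * √(μ.real univ) + 1) * exp (-(δ * Λ ^ 2)) * ‖S t' f‖ := by
        rw [← mul_assoc]
        gcongr
        linarith

end IsHeatSemigroup

/-- The Lebesgue density theorem at one density point of `J`. -/
theorem exists_mem_volume_closedBall_diff_le {J : Set ℝ} (hJm : MeasurableSet J)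
    (hJpos : 0 < volume J) {ε : ℝ} (hε : 0 < ε) :
    ∃ ℓ ∈ J, ∃ r₁ > 0, ∀ r ∈ Ioc 0 r₁, volume.real (closedBall ℓ r \ J) ≤ ε * r := by
  have hdens := Besicovitch.ae_tendsto_measure_inter_div_of_measurableSet volume hJm.compl
  have : (ae (volume.restrict J)).NeBot := by
    rw [ae_neBot, ne_eq, Measure.restrict_eq_zero]
    exact hJpos.ne'
  obtain ⟨ℓ, hlim, hℓJ⟩ := ((ae_restrict_of_ae hdens).and (ae_restrict_mem hJm)).exists
  rw [indicator_of_notMem (not_not_intro hℓJ)] at hlim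
  obtain ⟨r₁, hr₁, hsmall⟩ := mem_nhdsGT_iff_exists_Ioc_subset.mp
    (hlim.eventually (gt_mem_nhds (ENNReal.ofReal_pos.mpr (half_pos hε))))
  refine ⟨ℓ, hℓJ, r₁, hr₁, fun r hr => ?_⟩
  have hball : volume (closedBall ℓ r) = ENNReal.ofReal (2 * r) := by
    rw [Real.volume_closedBall]
  have hlt : volume (Jᶜ ∩ closedBall ℓ r) / volume (closedBall ℓ r) < ENNReal.ofReal (ε / 2) :=
    hsmall hr
  rw [ENNReal.div_lt_iff (Or.inl (by simp [hball, hr.1])) (Or.inl measure_closedBall_lt_top.ne),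
    hball, ← ENNReal.ofReal_mul (half_pos hε).le, inter_comm, ← Set.sdiff_eq] at hlt
  rw [measureReal_def, ← ENNReal.toReal_ofReal (by nlinarith [hr.1] : 0 ≤ ε * r)]
  exact ENNReal.toReal_mono ENNReal.ofReal_ne_top (hlt.le.trans_eq (by ring_nf))

theorem exists_dyadic_windows {J : Set ℝ} {T : ℝ} (hJm : MeasurableSet J)
    (hJsub : J ⊆ Ioo 0 T) (hJpos : 0 < volume J) :
    ∃ ℓ d : ℝ, 0 < ℓ ∧ 0 < d ∧ ℓ + d ≤ T ∧ ∀ m : ℕ,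
      d / 2 ^ m / 8 ≤ volume.real (J ∩ Ioo (ℓ + 3 / 4 * (d / 2 ^ m)) (ℓ + d / 2 ^ m)) := by
  obtain ⟨ℓ, hℓJ, r₁, hr₁, hdens⟩ :=
    exists_mem_volume_closedBall_diff_le hJm hJpos (by norm_num : (0 : ℝ) < 1 / 8)
  obtain ⟨hℓ, hℓT⟩ := hJsub hℓJ
  refine ⟨ℓ, min r₁ (T - ℓ), hℓ, lt_min hr₁ (by linarith), by linarith [min_le_right r₁ (T - ℓ)],
    fun m => ?_⟩
  set r := min r₁ (T - ℓ) / 2 ^ m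
  have hr : r ∈ Ioc 0 r₁ := ⟨by positivity, (div_le_self (lt_min hr₁ (by linarith)).le
    (one_le_pow₀ one_le_two)).trans (min_le_left _ _)⟩
  have hwin : Ioo (ℓ + 3 / 4 * r) (ℓ + r) ⊆ closedBall ℓ r := by
    intro x hx
    rw [Real.closedBall_eq_Icc]
    constructor <;> linarith [hx.1, hx.2, hr.1]
  have hsplit := measureReal_inter_add_sdiff (μ := volume) (s := Ioo (ℓ + 3 / 4 * r) (ℓ + r)) hJm
    (by simp)
  have hdiff : volume.real (Ioo (ℓ + 3 / 4 * r) (ℓ + r) \ J) ≤ 1 / 8 * r :=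
    (measureReal_mono (sdiff_subset_sdiff_left hwin)
      ((measure_mono sdiff_subset).trans_lt measure_closedBall_lt_top).ne).trans (hdens r hr)
  rw [Real.volume_real_Ioo_of_le (by linarith [hr.1]), inter_comm] at hsplit
  linarith

section Telescoping

open Finset

theorem prod_range_mul_le {q w : ℕ → ℝ} (hq : ∀ m, 0 ≤ q m) (hw : ∀ m, 1 ≤ w m)
    (hqw : ∀ m, q m * w (m + 1) ≤ (1 / 4) ^ (m + 1)) (m : ℕ) :
    (∏ j ∈ range m, q j) * w m ≤ (1 / 4) ^ m * w 0 := by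
  cases m with
  | zero => simp
  | succ n =>
    have hq1 : ∀ j, q j ≤ 1 := fun j =>
      calc q j ≤ q j * w (j + 1) := le_mul_of_one_le_right (hq j) (hw (j + 1))
        _ ≤ (1 / 4) ^ (j + 1) := hqw j
        _ ≤ 1 := pow_le_one₀ (by norm_num) (by norm_num)
    calc (∏ j ∈ range (n + 1), q j) * w (n + 1)
        = (∏ j ∈ range n, q j) * (q n * w (n + 1)) := by rw [prod_range_succ, mul_assoc]
      _ ≤ 1 * (1 / 4) ^ (n + 1) :=
          mul_le_mul (prod_le_one (fun j _ => hq j) fun j _ => hq1 j) (hqw n)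
            (mul_nonneg (hq n) (zero_le_one.trans (hw _))) zero_le_one
      _ = (1 / 4) ^ (n + 1) := one_mul _
      _ ≤ (1 / 4) ^ (n + 1) * w 0 := le_mul_of_one_le_right (by positivity) (hw 0)

theorem le_add_of_telescoping {a A Y q : ℕ → ℝ} (hq : ∀ m, 0 ≤ q m)
    (hrec : ∀ m, a m ≤ A m * Y m + q m * a (m + 1)) (M : ℕ) :
    a 0 ≤ ∑ m ∈ range M, (∏ j ∈ range m, q j) * (A m * Y m) + (∏ j ∈ range M, q j) * a M := by
  induction M with
  | zero => simp
  | succ M ih =>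
    calc a 0 ≤ ∑ m ∈ range M, (∏ j ∈ range m, q j) * (A m * Y m) + (∏ j ∈ range M, q j) * a M :=
          ih
      _ ≤ ∑ m ∈ range M, (∏ j ∈ range m, q j) * (A m * Y m)
            + (∏ j ∈ range M, q j) * (A M * Y M + q M * a (M + 1)) :=
          add_le_add_right (mul_le_mul_of_nonneg_left (hrec M) (prod_nonneg fun j _ => hq j)) _
      _ = _ := by rw [sum_range_succ, prod_range_succ]; ring

theorem le_of_telescoping {a A Y q w : ℕ → ℝ} {c B Y₀ : ℝ}
    (hrec : ∀ m, a m ≤ A m * Y m + q m * a (m + 1)) (hA : ∀ m, A m ≤ c * 2 ^ m * w m)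
    (hc : 0 ≤ c) (hY : ∀ m, 0 ≤ Y m) (hY₀ : ∀ m, Y m ≤ Y₀) (ha : ∀ m, a m ≤ B) (hB : 0 ≤ B)
    (hq : ∀ m, 0 ≤ q m) (hw : ∀ m, 1 ≤ w m) (hqw : ∀ m, q m * w (m + 1) ≤ (1 / 4) ^ (m + 1)) :
    a 0 ≤ 2 * c * w 0 * Y₀ := by
  have hP := prod_range_mul_le hq hw hqw
  have hP_nonneg : ∀ m, 0 ≤ ∏ j ∈ range m, q j := fun m => prod_nonneg fun j _ => hq j
  have hY₀_nonneg : 0 ≤ Y₀ := (hY 0).trans (hY₀ 0)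
  have hcwY : 0 ≤ c * w 0 * Y₀ := mul_nonneg (mul_nonneg hc (zero_le_one.trans (hw 0))) hY₀_nonneg
  have hterm : ∀ m, (∏ j ∈ range m, q j) * (A m * Y m) ≤ c * w 0 * Y₀ * (1 / 2) ^ m := fun m =>
    calc (∏ j ∈ range m, q j) * (A m * Y m)
        ≤ (∏ j ∈ range m, q j) * (c * 2 ^ m * w m * Y₀) :=
          mul_le_mul_of_nonneg_left (mul_le_mul (hA m) (hY₀ m) (hY m)
            (mul_nonneg (by positivity) (zero_le_one.trans (hw m)))) (hP_nonneg m)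
      _ = ((∏ j ∈ range m, q j) * w m) * (c * 2 ^ m * Y₀) := by ring
      _ ≤ ((1 / 4) ^ m * w 0) * (c * 2 ^ m * Y₀) :=
          mul_le_mul_of_nonneg_right (hP m) (by positivity)
      _ = c * w 0 * Y₀ * ((1 / 4) ^ m * 2 ^ m) := by ring
      _ = c * w 0 * Y₀ * (1 / 2) ^ m := by rw [← mul_pow]; norm_num
  have hbound : ∀ M : ℕ, a 0 ≤ 2 * c * w 0 * Y₀ + (1 / 4) ^ M * w 0 * B := fun M =>
    calc a 0 ≤ ∑ m ∈ range M, (∏ j ∈ range m, q j) * (A m * Y m) + (∏ j ∈ range M, q j) * a M :=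
          le_add_of_telescoping hq hrec M
      _ ≤ ∑ m ∈ range M, c * w 0 * Y₀ * (1 / 2) ^ m + (1 / 4) ^ M * w 0 * B :=
          add_le_add (sum_le_sum fun m _ => hterm m)
            ((mul_le_mul_of_nonneg_left (ha M) (hP_nonneg M)).trans (mul_le_mul_of_nonneg_right
              ((le_mul_of_one_le_right (hP_nonneg M) (hw M)).trans (hP M)) hB))
      _ ≤ 2 * c * w 0 * Y₀ + (1 / 4) ^ M * w 0 * B := by
          rw [← mul_sum]
          nlinarith [mul_le_mul_of_nonneg_left (sum_geometric_two_le M) hcwY]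
  have hlim : Tendsto (fun M : ℕ => 2 * c * w 0 * Y₀ + (1 / 4) ^ M * w 0 * B) atTop
      (𝓝 (2 * c * w 0 * Y₀ + 0 * w 0 * B)) :=
    tendsto_const_nhds.add (((tendsto_pow_atTop_nhds_zero_of_lt_one (by norm_num)
      (by norm_num)).mul_const _).mul_const _)
  simpa using ge_of_tendsto' hlim hbound

end Telescoping

/-- With frequencies `L * 2 ^ m`, the damping over the time gap `d / 2 ^ m / 4` beats the
observation cost `e^{N L 2 ^ (m + 1)}` of the next window. -/
theorem exists_frequency_scale {N c d : ℝ} (hN : 0 ≤ N) (hc : 0 ≤ c) (hd : 0 < d) :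
    ∃ L > 0, ∀ m : ℕ,
      (N * exp (N * (L * 2 ^ m)) * c + 1) * exp (-(d / 2 ^ m / 4 * (L * 2 ^ m) ^ 2))
        * exp (N * (L * 2 ^ (m + 1))) ≤ (1 / 4) ^ (m + 1) := by
  set K := N * c + 1
  have hK : 1 ≤ K := le_add_of_nonneg_left (mul_nonneg hN hc)
  set L := max 1 (4 * (3 * N + K + 2) / d)
  have hL1 : 1 ≤ L := le_max_left _ _
  have hLd : 3 * N + K + 2 ≤ d * L / 4 := by
    have := le_max_right 1 (4 * (3 * N + K + 2) / d)
    rw [div_le_iff₀ hd] at this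
    linarith
  refine ⟨L, by linarith, fun m => ?_⟩
  set x : ℝ := 2 ^ m
  have hx : (m : ℝ) + 1 ≤ x := by
    simp only [x]; exact_mod_cast Nat.lt_two_pow_self
  have hx1 : 1 ≤ x := by linarith [(m.cast_nonneg : (0 : ℝ) ≤ m)]
  have hE : 1 ≤ exp (N * (L * x)) := one_le_exp (by positivity)
  have hexponent : K + (N * (L * x) - d / x / 4 * (L * x) ^ 2 + N * (L * (x * 2)))
      ≤ (m + 1) * -2 := by
    have : d / x / 4 * (L * x) ^ 2 = d * L / 4 * L * x := by field_simp
    have hLx : x ≤ L * x := le_mul_of_one_le_left (by linarith) hL1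
    rw [this]
    nlinarith [mul_le_mul_of_nonneg_right hLd (by positivity : 0 ≤ L * x)]
  have h4 : exp (-2) ≤ 1 / 4 := by
    rw [exp_neg, inv_eq_one_div]
    gcongr
    linarith [quadratic_le_exp_of_nonneg (zero_le_two : (0 : ℝ) ≤ 2)]
  rw [show (2 : ℝ) ^ (m + 1) = x * 2 from pow_succ 2 m]
  calc (N * exp (N * (L * x)) * c + 1) * exp (-(d / x / 4 * (L * x) ^ 2))
        * exp (N * (L * (x * 2)))
      ≤ K * exp (N * (L * x)) * exp (-(d / x / 4 * (L * x) ^ 2)) * exp (N * (L * (x * 2))) := by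
        gcongr
        simp only [K]
        nlinarith
    _ ≤ exp K * exp (N * (L * x)) * exp (-(d / x / 4 * (L * x) ^ 2)) * exp (N * (L * (x * 2))) := by
        gcongr
        linarith [add_one_le_exp K]
    _ = exp (K + (N * (L * x) - d / x / 4 * (L * x) ^ 2 + N * (L * (x * 2)))) := by
        simp only [← exp_add]; ring_nf
    _ ≤ exp ((m + 1) * -2) := exp_le_exp.mpr hexponent
    _ = exp (-2) ^ (m + 1) := by rw [← exp_nat_mul]; push_cast; ring_nf
    _ ≤ (1 / 4) ^ (m + 1) := by gcongr

theorem observability_from_J_general {M : Type} [MeasurableSpace M] (μ : Measure M)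
    [IsFiniteMeasure μ]
    (e : HilbertBasis ℕ ℝ (Lp ℝ 2 μ)) (lam : ℕ → ℝ)
    (E : Set M)
    (Proj : ℝ → Lp ℝ 2 μ → Lp ℝ 2 μ)
    (hProj : ∀ (Λ : ℝ) (f : Lp ℝ 2 μ),
      HasSum (fun k => (if lam k ≤ Λ then e.repr f k else 0) • e k) (Proj Λ f))
    (S : ℝ → Lp ℝ 2 μ → Lp ℝ 2 μ)
    (hS : ∀ t : ℝ, 0 ≤ t → ∀ f : Lp ℝ 2 μ,
      HasSum (fun k => (Real.exp (-(t * lam k ^ 2)) * e.repr f k) • e k) (S t f))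
    (N : ℝ) (hN : 1 ≤ N)
    (hspec : ∀ Λ : ℝ, 0 ≤ Λ → ∀ f : Lp ℝ 2 μ,
      ‖Proj Λ f‖ ≤ N * Real.exp (N * Λ) * ∫ x in E, |(Proj Λ f : Lp ℝ 2 μ) x| ∂μ)
    (T : ℝ) (hT : 0 < T) (J : Set ℝ) (hJm : MeasurableSet J) (hJsub : J ⊆ Set.Ioo 0 T)
    (hJpos : 0 < volume J) :
    ∃ C > 0, ∀ f : Lp ℝ 2 μ,
      ‖S T f‖ ≤ C * ∫ s in (0 : ℝ)..T,
        J.indicator (fun s => ∫ x in E, |(S s f : Lp ℝ 2 μ) x| ∂μ) s := by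
  replace hS : IsHeatSemigroup e lam S := hS
  obtain ⟨ℓ, d, hℓ, hd, hℓdT, hwin⟩ := exists_dyadic_windows hJm hJsub hJpos
  obtain ⟨L, hL, hfreq⟩ := exists_frequency_scale (zero_le_one.trans hN) (sqrt_nonneg _) hd
  refine ⟨2 * (8 * N / d) * exp (N * L), by positivity, fun f => ?_⟩
  set g := fun s => ∫ x in E, |(S s f : Lp ℝ 2 μ) x| ∂μ
  have hg0 : ∀ s, 0 ≤ g s := fun s => integral_nonneg fun x => abs_nonneg _
  have hg : IntegrableOn g J := hS.integrableOn_observation E f hJm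
    (fun s hs => (hJsub hs).1.le) ((measure_mono hJsub).trans_lt measure_Ioo_lt_top)
  rw [intervalIntegral.integral_of_le hT.le, setIntegral_indicator hJm,
    inter_eq_right.mpr (hJsub.trans Ioo_subset_Ioc_self)]
  set t : ℕ → ℝ := fun m => ℓ + d / 2 ^ m
  set I : ℕ → Set ℝ := fun m => J ∩ Ioo (ℓ + 3 / 4 * (d / 2 ^ m)) (t m)
  have hIpos : ∀ m, 0 < volume.real (I m) := fun m => lt_of_lt_of_le (by positivity) (hwin m)
  have hrec : ∀ m, ‖S (t m) f‖ ≤ N * exp (N * (L * 2 ^ m)) / volume.real (I m) * (∫ s in I m, g s)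
      + (N * exp (N * (L * 2 ^ m)) * √(μ.real univ) + 1)
        * exp (-(d / 2 ^ m / 4 * (L * 2 ^ m) ^ 2)) * ‖S (t (m + 1)) f‖ := fun m =>
    hS.norm_le_window hProj (by positivity) (by positivity) (hspec _ (by positivity))
      (by positivity) (by positivity) (le_of_eq (by simp only [t, pow_succ]; ring))
      inter_subset_right (hJm.inter measurableSet_Ioo) (hIpos m) f (hg.mono_set inter_subset_left)
  have hA : ∀ m, N * exp (N * (L * 2 ^ m)) / volume.real (I m)
      ≤ 8 * N / d * 2 ^ m * exp (N * (L * 2 ^ m)) := fun m =>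
    (div_le_div_of_nonneg_left (by positivity) (by positivity) (hwin m)).trans_eq
      (by field_simp)
  calc ‖S T f‖ ≤ ‖S (t 0) f‖ := hS.norm_le_of_le (by positivity) (by simpa [t] using hℓdT) f
    _ ≤ 2 * (8 * N / d) * exp (N * (L * 2 ^ 0)) * ∫ s in J, g s :=
        le_of_telescoping hrec hA (by positivity) (fun m => integral_nonneg hg0)
          (fun m => setIntegral_mono_set hg (ae_of_all _ hg0) inter_subset_left.eventuallyLE)
          (fun m => hS.norm_le (by positivity) f) (norm_nonneg f) (fun m => by positivity)
          (fun m => one_le_exp (by positivity)) hfreq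
    _ = _ := by simp

/-- final observability estimate. If the `L¹` spectral inequality on `E`
holds with constant `N ≥ 1`, `T > 0` and `J ⊆ (0,T)` has positive Lebesgue measure, then
there is `C > 0` such that for every `f ∈ L²(μ)`:
`‖S_T f‖_{L²} ≤ C ∫_0^T 1_J(s) (∫_E |S_s f| dμ) ds`. -/
theorem observability_from_J {M : Type} [MeasurableSpace M] (μ : Measure M)
    [IsFiniteMeasure μ]
    (e : HilbertBasis ℕ ℝ (Lp ℝ 2 μ)) (lam : ℕ → ℝ) (hlam : ∀ k, 0 ≤ lam k)
    (E : Set M) (hE : MeasurableSet E)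
    (Proj : ℝ → Lp ℝ 2 μ → Lp ℝ 2 μ)
    (hProj : ∀ (Λ : ℝ) (f : Lp ℝ 2 μ),
      HasSum (fun k => (if lam k ≤ Λ then e.repr f k else 0) • e k) (Proj Λ f))
    (S : ℝ → Lp ℝ 2 μ → Lp ℝ 2 μ)
    (hS : ∀ t : ℝ, 0 ≤ t → ∀ f : Lp ℝ 2 μ,
      HasSum (fun k => (Real.exp (-(t * lam k ^ 2)) * e.repr f k) • e k) (S t f))
    (N : ℝ) (hN : 1 ≤ N)
    (hspec : ∀ Λ : ℝ, 0 ≤ Λ → ∀ f : Lp ℝ 2 μ,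
      ‖Proj Λ f‖ ≤ N * Real.exp (N * Λ) * ∫ x in E, |(Proj Λ f : Lp ℝ 2 μ) x| ∂μ)
    (T : ℝ) (hT : 0 < T) (J : Set ℝ) (hJm : MeasurableSet J) (hJsub : J ⊆ Set.Ioo 0 T)
    (hJpos : 0 < volume J) :
    ∃ C > 0, ∀ f : Lp ℝ 2 μ,
      ‖S T f‖ ≤ C * ∫ s in (0 : ℝ)..T,
        J.indicator (fun s => ∫ x in E, |(S s f : Lp ℝ 2 μ) x| ∂μ) s :=
  observability_from_J_general μ e lam E Proj hProj S hS N hN hspec T hT J hJm hJsub hJpos
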